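/- Suppose q = 2 and 0 < b < 1, or q > 2 and 0 < b ≤ q−1. Then ψ(k) := 1 + b·k^q − k^{2q−2} − b·k^{q−2} > 0 for all k ∈ (0,1). Consequently, the nonlinearity f(r,z₁,z₂) = −z₁ + z₁^{2q−1} + b·z₁^{q−1}·z₂^q satisfies f(r,z₁,z₂)·z₂ > f(r,z₂,z₁)·z₁ for all z₁ > z₂ > 0 and all r > 0. -/

import Mathlib

open Real Set

/-!
For `q = 2` one has `ψ(k) = (1 - b)(1 - k²)`. For `q > 2`, `ψ(1) = 0` and
`ψ'(k) = k^(q-3) (b q k² - (2q - 2) k^q - b (q - 2))`, which is negative on `(0,1)`: Bernoulli's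
inequality for `(k²)^(q/2)` gives `q k² < 2 k^q + q - 2`, and `b ≤ q - 1` absorbs the rest.
So `ψ` decreases strictly to `ψ(1) = 0`. The statement about `f` follows from the homogeneity
identity `f(z₁,z₂) z₂ - f(z₂,z₁) z₁ = z₁^(2q) k ψ(k)` with `k = z₂ / z₁`.
-/

noncomputable def psi (b q k : ℝ) : ℝ := 1 + b * k ^ q - k ^ (2 * q - 2) - b * k ^ (q - 2)

noncomputable def nonlinearity (b q z₁ z₂ : ℝ) : ℝ := -z₁ + z₁ ^ (2 * q - 1) + b * z₁ ^ (q - 1) * z₂ ^ q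

lemma rpow_two_mul_eq_sq {x : ℝ} (hx : 0 ≤ x) (q : ℝ) : x ^ (2 * q) = (x ^ q) ^ 2 := by
  rw [mul_comm, rpow_mul hx, rpow_two]

lemma mul_sq_lt_two_mul_rpow_add {q x : ℝ} (hq : 2 < q) (hx : 0 ≤ x) (hx1 : x ≠ 1) :
    q * x ^ 2 < 2 * x ^ q + (q - 2) := by
  have hsq : x ^ 2 - 1 ≠ 0 :=
    sub_ne_zero.2 fun h => hx1 ((pow_eq_one_iff_of_nonneg hx two_ne_zero).1 h)
  have hpow : (1 + (x ^ 2 - 1)) ^ (q / 2) = x ^ q := by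
    rw [add_sub_cancel, ← rpow_natCast, ← rpow_mul hx]
    congr 1
    push_cast
    ring
  have := one_add_mul_self_lt_rpow_one_add (by nlinarith) hsq (show 1 < q / 2 by linarith)
  rw [hpow] at this
  linarith

lemma hasDerivAt_psi (b : ℝ) {q x : ℝ} (hx : 0 < x) :
    HasDerivAt (psi b q)
      (x ^ q / x ^ 3 * (b * q * x ^ 2 - (2 * q - 2) * x ^ q - b * (q - 2))) x := by
  have h := ((((hasDerivAt_rpow_const (p := q) (Or.inl hx.ne')).const_mul b).const_add 1).sub
    (hasDerivAt_rpow_const (p := 2 * q - 2) (Or.inl hx.ne'))).sub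
    ((hasDerivAt_rpow_const (p := q - 2) (Or.inl hx.ne')).const_mul b)
  refine HasDerivAt.congr_deriv (f := psi b q) h ?_
  simp only [rpow_sub hx, rpow_two_mul_eq_sq hx.le, rpow_one, rpow_two]
  field_simp

lemma psi_strictAntiOn {b q : ℝ} (hq : 2 < q) (hb₀ : 0 < b) (hb : b ≤ q - 1) :
    StrictAntiOn (psi b q) (Ioc 0 1) := by
  apply strictAntiOn_of_hasDerivWithinAt_neg (convex_Ioc 0 1)
    (f' := fun x => x ^ q / x ^ 3 * (b * q * x ^ 2 - (2 * q - 2) * x ^ q - b * (q - 2)))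
    (fun x hx => (hasDerivAt_psi b hx.1).continuousAt.continuousWithinAt)
  all_goals rw [interior_Ioc]
  · exact fun x hx => (hasDerivAt_psi b hx.1).hasDerivWithinAt
  · rintro x ⟨hx₀, hx₁⟩
    have hbernoulli := mul_sq_lt_two_mul_rpow_add hq hx₀.le hx₁.ne
    have hxq : 0 < x ^ q := rpow_pos_of_pos hx₀ q
    refine mul_neg_of_pos_of_neg (by positivity) ?_
    linarith [mul_lt_mul_of_pos_left hbernoulli hb₀, mul_le_mul_of_nonneg_right hb hxq.le]

lemma psi_two_pos {b k : ℝ} (hb : b < 1) (hk : k ∈ Ioo (0 : ℝ) 1) : 0 < psi b 2 k := by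
  have : psi b 2 k = (1 - b) * (1 - k ^ 2) := by
    norm_num [psi]
    ring
  rw [this]
  exact mul_pos (by linarith) (by nlinarith [hk.1, hk.2])

lemma psi_pos_of_two_lt {b q k : ℝ} (hq : 2 < q) (hb₀ : 0 < b) (hb : b ≤ q - 1)
    (hk : k ∈ Ioo (0 : ℝ) 1) : 0 < psi b q k := by
  have := psi_strictAntiOn hq hb₀ hb ⟨hk.1, hk.2.le⟩ ⟨one_pos, le_rfl⟩ hk.2
  simpa [psi] using this

lemma nonlinearity_mul_sub_eq {b q z₁ z₂ : ℝ} (hz₁ : 0 < z₁) (hz₂ : 0 < z₂) :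
    nonlinearity b q z₁ z₂ * z₂ - nonlinearity b q z₂ z₁ * z₁ =
      z₁ ^ (2 * q) * (z₂ / z₁) * psi b q (z₂ / z₁) := by
  simp only [nonlinearity, psi, div_rpow hz₂.le hz₁.le, rpow_sub hz₁, rpow_sub hz₂,
    rpow_two_mul_eq_sq hz₁.le, rpow_two_mul_eq_sq hz₂.le, rpow_one, rpow_two]
  field_simp
  ring

/-- If `q = 2, 0 < b < 1` or `q > 2, 0 < b ≤ q-1` then
`ψ(k) = 1 + b k^q − k^{2q−2} − b k^{q−2} > 0` on `(0,1)`; consequently the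
nonlinearity `f(r,z₁,z₂) = -z₁ + z₁^{2q-1} + b z₁^{q-1} z₂^q` satisfies
`f(r,z₁,z₂) z₂ > f(r,z₂,z₁) z₁` for all `z₁ > z₂ > 0` and `r > 0`. -/
theorem psi_positive (q b : ℝ)
    (h : (q = 2 ∧ 0 < b ∧ b < 1) ∨ (2 < q ∧ 0 < b ∧ b ≤ q - 1)) :
    (∀ k ∈ Set.Ioo (0:ℝ) 1,
      1 + b * k ^ q - k ^ (2 * q - 2) - b * k ^ (q - 2) > 0) ∧
    (∀ r > (0:ℝ), ∀ z₁ z₂ : ℝ, 0 < z₂ → z₂ < z₁ →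
      (-z₁ + z₁ ^ (2 * q - 1) + b * z₁ ^ (q - 1) * z₂ ^ q) * z₂ >
      (-z₂ + z₂ ^ (2 * q - 1) + b * z₂ ^ (q - 1) * z₁ ^ q) * z₁) := by
  have hpsi : ∀ k ∈ Ioo (0 : ℝ) 1, 0 < psi b q k := by
    rcases h with ⟨rfl, -, hb⟩ | ⟨hq, hb₀, hb⟩
    · exact fun k hk => psi_two_pos hb hk
    · exact fun k hk => psi_pos_of_two_lt hq hb₀ hb hk
  refine ⟨hpsi, fun _ _ z₁ z₂ hz₂ hlt => ?_⟩
  have hz₁ : 0 < z₁ := hz₂.trans hlt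
  have hk : z₂ / z₁ ∈ Ioo (0 : ℝ) 1 := ⟨div_pos hz₂ hz₁, (div_lt_one hz₁).2 hlt⟩
  have hprod : 0 < z₁ ^ (2 * q) * (z₂ / z₁) * psi b q (z₂ / z₁) :=
    mul_pos (mul_pos (rpow_pos_of_pos hz₁ _) hk.1) (hpsi _ hk)
  have hid := nonlinearity_mul_sub_eq (b := b) (q := q) hz₁ hz₂
  unfold nonlinearity at hid
  linarith
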